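/- arXiv:2401.15801 — 2 statements merged into one kernel-verified Lean document; each statement's English description precedes it below -/
import Mathlib

section
/- Let μ be the Borel probability measure on ℝ^d (equipped with the ℓ∞ metric) that assigns mass μ({(n_1, …, n_d)}) = 2^{-(n_1 + ⋯ + n_d)} to each point (n_1, …, n_d) with n_1, …, n_d positive integers. Then for every α > 0, the α-entropic dimension of μ equals 0 and the α-upper Wasserstein dimension of μ equals 2α: d̄_α(μ) = 0 and d*_α(μ) = 2α. -/
open Filter Topology MeasureTheory Set
open scoped ENNReal NNReal

noncomputable section

/-- Minimal number of closed balls of radius `ε` needed to cover `S`. -/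
def coverN {X : Type*} [PseudoMetricSpace X] (ε : ℝ) (S : Set X) : ℕ∞ :=
  ⨅ (t : Finset X) (_ : S ⊆ ⋃ x ∈ t, Metric.closedBall x ε), (t.card : ℕ∞)

/-- The `(ε,τ)`-covering number of a measure `μ`. -/
def measCoverN {X : Type*} [PseudoMetricSpace X] [MeasurableSpace X]
    (μ : Measure X) (ε τ : ℝ) : ℕ∞ :=
  ⨅ (S : Set X) (_ : MeasurableSet S) (_ : ENNReal.ofReal (1 - τ) ≤ μ S), coverN ε S

/-- Extended logarithm `ℝ≥0∞ → EReal`. -/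
def elog (x : ℝ≥0∞) : EReal :=
  if x = 0 then ⊥ else if x = ⊤ then ⊤ else ((Real.log x.toReal : ℝ) : EReal)

/-- `log N / log (1/ε)` as an extended real. -/
def dimRatio (N : ℕ∞) (ε : ℝ) : EReal :=
  elog (N : ℝ≥0∞) * (((Real.log (1 / ε))⁻¹ : ℝ) : EReal)

/-- The `α`-entropic dimension of a measure. -/
def entropicDim {X : Type*} [PseudoMetricSpace X] [MeasurableSpace X]
    (μ : Measure X) (α : ℝ) : EReal :=
  limsup (fun ε : ℝ => dimRatio (measCoverN μ ε (ε ^ α)) ε) (𝓝[>] (0 : ℝ))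

/-- The `α`-upper Wasserstein dimension of a measure. -/
def upperWDim {X : Type*} [PseudoMetricSpace X] [MeasurableSpace X]
    (μ : Measure X) (α : ℝ) : EReal :=
  sInf {x : EReal | ∃ s : ℝ, x = (s : EReal) ∧ 2 * α < s ∧
    limsup (fun ε : ℝ => dimRatio (measCoverN μ ε (ε ^ (s * α / (s - 2 * α)))) ε)
      (𝓝[>] (0 : ℝ)) ≤ (s : EReal)}

/-- The lower Wasserstein dimension of a measure. -/
def lowerWDim {X : Type*} [PseudoMetricSpace X] [MeasurableSpace X]
    (μ : Measure X) : EReal :=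
  limsup (fun τ : ℝ =>
    liminf (fun ε : ℝ => dimRatio (measCoverN μ ε τ) ε) (𝓝[>] (0 : ℝ))) (𝓝[>] (0 : ℝ))

/-- The support of a measure: points all of whose neighbourhoods have positive mass. -/
def msupport {X : Type*} [PseudoMetricSpace X] [MeasurableSpace X] (μ : Measure X) : Set X :=
  {x | ∀ r : ℝ, 0 < r → 0 < μ (Metric.ball x r)}

/-- The upper Minkowski dimension of (the support of) a measure. -/
def minkowskiDim {X : Type*} [PseudoMetricSpace X] [MeasurableSpace X]
    (μ : Measure X) : EReal :=
  limsup (fun ε : ℝ => dimRatio (coverN ε (msupport μ)) ε) (𝓝[>] (0 : ℝ))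

/-- The upper packing dimension of a measure. -/
def packingDim {X : Type*} [PseudoMetricSpace X] [MeasurableSpace X]
    (μ : Measure X) : EReal :=
  essSup (fun x =>
    limsup (fun r : ℝ => elog (μ (Metric.closedBall x r)) * (((Real.log r)⁻¹ : ℝ) : EReal))
      (𝓝[>] (0 : ℝ))) μ

/-- The lower regularity dimension of a measure. -/
def lowerRegDim {X : Type*} [PseudoMetricSpace X] [MeasurableSpace X]
    (μ : Measure X) : EReal :=
  sSup {x : EReal | ∃ s : ℝ, x = (s : EReal) ∧ ∃ C : ℝ, 0 < C ∧
    ∀ x0 ∈ msupport μ, ∀ r R : ℝ, 0 < r → r < R →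
      ENNReal.ofReal (C * (R / r) ^ s) ≤
        μ (Metric.closedBall x0 R) / μ (Metric.closedBall x0 r)}

/-- Partial derivative in coordinate `i`. -/
def pderiv' {d : ℕ} (i : Fin d) (f : (Fin d → ℝ) → ℝ) : (Fin d → ℝ) → ℝ :=
  fun x => fderiv ℝ f x (Pi.single i 1)

/-- Multi-index partial derivative `∂^s f`. -/
def mpderiv {d : ℕ} (s : Fin d → ℕ) (f : (Fin d → ℝ) → ℝ) : (Fin d → ℝ) → ℝ :=
  (List.finRange d).foldr (fun i g => (pderiv' i)^[s i] g) f

/-- The `β`-Hölder norm of `f : ℝ^d → ℝ` (with `ℓ∞` distances), valued in `ℝ≥0∞`. -/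
def holderNorm {d : ℕ} (β : ℝ) (f : (Fin d → ℝ) → ℝ) : ℝ≥0∞ :=
  (∑' s : {s : Fin d → ℕ // ∑ i, s i ≤ ⌊β⌋₊}, ⨆ x : Fin d → ℝ, (‖mpderiv s.1 f x‖₊ : ℝ≥0∞)) +
  ∑' s : {s : Fin d → ℕ // ∑ i, s i = ⌊β⌋₊}, ⨆ (x : Fin d → ℝ) (y : Fin d → ℝ) (_ : x ≠ y),
      (‖mpderiv s.1 f x - mpderiv s.1 f y‖₊ : ℝ≥0∞) / (nndist x y : ℝ≥0∞) ^ (β - (⌊β⌋₊ : ℝ))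

/-- The class `H^β(ℝ^d, ℝ, C)` of `β`-Hölder functions with norm at most `C`. -/
def HolderClass (d : ℕ) (β C : ℝ) : Set ((Fin d → ℝ) → ℝ) :=
  {f | ContDiff ℝ (⌊β⌋₊ : ℕ) f ∧ holderNorm β f ≤ ENNReal.ofReal C}

/-- The integral probability metric `‖P - Q‖_F`. -/
def ipm {X : Type*} [MeasurableSpace X] (F : Set (X → ℝ)) (P Q : Measure X) : ℝ :=
  ⨆ f : F, |∫ x, f.1 x ∂P - ∫ x, f.1 x ∂Q|

/-- The empirical measure of a sample `x : Fin n → X`. -/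
def empMeas {X : Type*} [MeasurableSpace X] {n : ℕ} (x : Fin n → X) : Measure X :=
  (n : ℝ≥0∞)⁻¹ • ∑ i : Fin n, Measure.dirac (x i)

/-- Total variation distance between two measures. -/
def tvDist {X : Type*} [MeasurableSpace X] (P Q : Measure X) : ℝ :=
  ⨆ A : {A : Set X // MeasurableSet A}, |(P A.1).toReal - (Q A.1).toReal|

end

open Filter Topology MeasureTheory Set
open scoped ENNReal

/-!
The mass of `μ` outside the cube `{1, …, K}^d` is at most `d 2^(-K)` (Bernoulli), so for
`K ≈ log₂ (1/ε)` a set of mass `1 - ε^γ` is covered by `K^d ≈ (log (1/ε))^d` balls and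
`log 𝒩_ε(μ, ε^γ) / log (1/ε) → 0` for every `γ > 0`. Hence `d̄_α(μ) = 0`, and every `s > 2α` is
admissible in the infimum defining `d*_α(μ)`.
-/

lemma coverN_finset_le_card {X : Type*} [PseudoMetricSpace X] {ε : ℝ} (hε : 0 ≤ ε)
    (t : Finset X) : coverN ε (t : Set X) ≤ t.card :=
  iInf₂_le_of_le t (fun _ hx => mem_biUnion hx (Metric.mem_closedBall_self hε)) le_rfl

lemma measCoverN_le_coverN {X : Type*} [PseudoMetricSpace X] [MeasurableSpace X]
    {μ : Measure X} {ε τ : ℝ} {S : Set X} (hS : MeasurableSet S)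
    (hμS : ENNReal.ofReal (1 - τ) ≤ μ S) : measCoverN μ ε τ ≤ coverN ε S :=
  iInf₂_le_of_le S hS (iInf_le _ hμS)

lemma one_le_measCoverN {X : Type*} [PseudoMetricSpace X] [MeasurableSpace X]
    (μ : Measure X) (ε : ℝ) {τ : ℝ} (hτ : τ < 1) : 1 ≤ measCoverN μ ε τ := by
  refine le_iInf₂ fun S _ => le_iInf fun hμS => le_iInf₂ fun t hcover => ?_
  obtain ⟨x, hx⟩ : S.Nonempty := nonempty_iff_ne_empty.2 fun hS => by
    rw [hS, measure_empty, nonpos_iff_eq_zero, ENNReal.ofReal_eq_zero] at hμS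
    linarith
  obtain ⟨y, hy, -⟩ := mem_iUnion₂.1 (hcover hx)
  exact_mod_cast Finset.card_pos.2 ⟨y, hy⟩

lemma dimRatio_natCast {n : ℕ} (hn : n ≠ 0) (ε : ℝ) :
    dimRatio n ε = ((Real.log n / Real.log (1 / ε) : ℝ) : EReal) := by
  have h0 : ((n : ℕ∞) : ℝ≥0∞) ≠ 0 := by simpa using hn
  have htop : ((n : ℕ∞) : ℝ≥0∞) ≠ ⊤ := by simp
  rw [dimRatio, elog, if_neg h0, if_neg htop, ← EReal.coe_mul]
  simp [div_eq_mul_inv]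

lemma tendsto_log_const_mul_div_atTop {C : ℝ} (hC : 0 < C) :
    Tendsto (fun L => Real.log (C * L) / L) atTop (𝓝 0) := by
  have h : Tendsto (fun L => C * (Real.log (C * L) / (C * L))) atTop (𝓝 (C * 0)) :=
    (Real.isLittleO_log_id_atTop.tendsto_div_nhds_zero.comp
      (tendsto_id.const_mul_atTop hC)).const_mul C
  rw [mul_zero] at h
  refine h.congr' ?_
  filter_upwards [eventually_gt_atTop 0] with L hL
  field_simp

lemma tendsto_log_one_div_nhdsGT_zero :
    Tendsto (fun ε : ℝ => Real.log (1 / ε)) (𝓝[>] 0) atTop := by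
  refine (tendsto_neg_atBot_atTop.comp Real.tendsto_log_nhdsGT_zero).congr fun ε => ?_
  simp [Real.log_inv]

lemma tendsto_dimRatio_of_le_pow_log {N : ℝ → ℕ∞} (d : ℕ) {C : ℝ} (hC : 0 < C)
    (hN : ∀ᶠ ε in 𝓝[>] 0, 1 ≤ N ε ∧ ∃ K : ℕ, N ε ≤ (K ^ d : ℕ) ∧ (K : ℝ) ≤ C * Real.log (1 / ε)) :
    Tendsto (fun ε => dimRatio (N ε) ε) (𝓝[>] 0) (𝓝 0) := by
  set u : ℝ → ℝ := fun ε => d * (Real.log (C * Real.log (1 / ε)) / Real.log (1 / ε))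
  have hu : Tendsto u (𝓝[>] 0) (𝓝 0) := by
    have h := ((tendsto_log_const_mul_div_atTop hC).comp
      tendsto_log_one_div_nhdsGT_zero).const_mul (d : ℝ)
    rwa [mul_zero] at h
  have hbounds : ∀ᶠ ε in 𝓝[>] 0, 0 ≤ dimRatio (N ε) ε ∧ dimRatio (N ε) ε ≤ (u ε : EReal) := by
    filter_upwards [hN, Ioo_mem_nhdsGT one_pos] with ε ⟨hN1, K, hNK, hKL⟩ ⟨hε0, hε1⟩
    obtain ⟨n, hn⟩ := ENat.ne_top_iff_exists.1 (ne_top_of_le_ne_top (by simp) hNK)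
    rw [← hn] at hN1 hNK ⊢
    have hn1 : 1 ≤ n := by exact_mod_cast hN1
    have hnK : n ≤ K ^ d := by exact_mod_cast hNK
    have hL : 0 < Real.log (1 / ε) := Real.log_pos (by rw [one_div]; exact one_lt_inv₀ hε0 |>.2 hε1)
    have hlog : Real.log n ≤ d * Real.log (C * Real.log (1 / ε)) := by
      rcases Nat.eq_zero_or_pos d with rfl | hd
      · simp [show n = 1 by simpa using hnK.antisymm hn1]
      have hK : 0 < K := Nat.pos_of_ne_zero fun hK => by simp [hK, hd.ne'] at hnK; omega
      calc Real.log n ≤ Real.log ((K ^ d : ℕ) : ℝ) :=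
            Real.log_le_log (by exact_mod_cast hn1) (by exact_mod_cast hnK)
        _ = d * Real.log K := by push_cast; rw [Real.log_pow]
        _ ≤ d * Real.log (C * Real.log (1 / ε)) := by gcongr
    rw [dimRatio_natCast (by omega)]
    constructor
    · exact_mod_cast div_nonneg (Real.log_natCast_nonneg n) hL.le
    · exact EReal.coe_le_coe_iff.2
        ((div_le_div_of_nonneg_right hlog hL.le).trans_eq (mul_div_assoc _ _ _))
  exact tendsto_of_tendsto_of_tendsto_of_le_of_le' tendsto_const_nhds (EReal.tendsto_coe.2 hu)
    (hbounds.mono fun _ h => h.1) (hbounds.mono fun _ h => h.2)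

lemma sum_Icc_one_half_pow (K : ℕ) : ∑ j ∈ Finset.Icc 1 K, (1 / 2 : ℝ) ^ j = 1 - (1 / 2) ^ K := by
  induction K with
  | zero => simp
  | succ K ih => rw [Finset.sum_Icc_succ_top (by omega), ih]; ring

noncomputable def intCube (d K : ℕ) : Finset (Fin d → ℝ) :=
  (Fintype.piFinset fun _ => Finset.Icc 1 K).image fun n i => (n i : ℝ)

lemma card_intCube_le (d K : ℕ) : (intCube d K).card ≤ K ^ d :=
  Finset.card_image_le.trans (by simp)

def HasGeometricPointMasses {d : ℕ} (μ : Measure (Fin d → ℝ)) : Prop :=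
  ∀ n : Fin d → ℕ, (∀ i, 0 < n i) →
    μ ({fun i => (n i : ℝ)} : Set (Fin d → ℝ)) = (2 : ℝ≥0∞)⁻¹ ^ (∑ i, n i)

section GeometricGrid

variable {d : ℕ} {μ : Measure (Fin d → ℝ)} [IsFiniteMeasure μ]

lemma measureReal_intCube (hμ : HasGeometricPointMasses μ) (K : ℕ) :
    μ.real (intCube d K) = (1 - (1 / 2) ^ K) ^ d := by
  have hinj : Function.Injective fun (n : Fin d → ℕ) (i : Fin d) => (n i : ℝ) :=
    fun a b h => funext fun i => Nat.cast_injective (congrFun h i)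
  rw [← sum_measureReal_singleton, intCube, Finset.sum_image fun a _ b _ h => hinj h,
    ← sum_Icc_one_half_pow, ← Fin.prod_const, Finset.prod_univ_sum]
  refine Finset.sum_congr rfl fun n hn => ?_
  have hpos : ∀ i, 0 < n i := fun i => (Finset.mem_Icc.1 (Fintype.mem_piFinset.1 hn i)).1
  rw [measureReal_def, hμ n hpos, Finset.prod_pow_eq_pow_sum]
  simp

lemma measCoverN_le_of_half_pow_le (hμ : HasGeometricPointMasses μ) {ε τ : ℝ} (hε : 0 ≤ ε)
    {K : ℕ} (hK : d * (1 / 2) ^ K ≤ τ) : measCoverN μ ε τ ≤ (K ^ d : ℕ) := by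
  have hmass : ENNReal.ofReal (1 - τ) ≤ μ (intCube d K) := by
    rw [← ofReal_measureReal, measureReal_intCube hμ]
    refine ENNReal.ofReal_le_ofReal ?_
    have hhalf : (1 / 2 : ℝ) ^ K ≤ 1 := pow_le_one₀ (by norm_num) (by norm_num)
    have hbernoulli := one_add_mul_le_pow (by linarith : -2 ≤ -(1 / 2 : ℝ) ^ K) d
    rw [← sub_eq_add_neg] at hbernoulli
    linarith
  calc measCoverN μ ε τ ≤ coverN ε (intCube d K : Set (Fin d → ℝ)) :=
        measCoverN_le_coverN (Finset.measurableSet _) hmass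
    _ ≤ (intCube d K).card := coverN_finset_le_card hε _
    _ ≤ (K ^ d : ℕ) := by exact_mod_cast card_intCube_le d K

end GeometricGrid

lemma eventually_exists_mul_half_pow_le {c : ℝ} (hc : 0 ≤ c) {γ : ℝ} (hγ : 0 < γ) :
    ∃ C > 0, ∀ᶠ ε in 𝓝[>] (0 : ℝ),
      ∃ K : ℕ, c * (1 / 2) ^ K ≤ ε ^ γ ∧ (K : ℝ) ≤ C * Real.log (1 / ε) := by
  -- `K = ⌈b log (1/ε)⌉` gives `2 ^ (-K) ≤ ε ^ (2γ)`, and the spare `ε ^ γ` absorbs `c` for small `ε`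
  set b := 2 * γ / Real.log 2
  have hrpow : Tendsto (fun ε : ℝ => c * ε ^ γ) (𝓝[>] 0) (𝓝 0) := by
    have h := ((Real.continuousAt_rpow_const 0 γ (Or.inr hγ.le)).tendsto.const_mul c).mono_left
      (nhdsWithin_le_nhds (s := Ioi 0))
    rwa [Real.zero_rpow hγ.ne', mul_zero] at h
  refine ⟨b + 1, by positivity, ?_⟩
  filter_upwards [hrpow.eventually (ge_mem_nhds one_pos),
    tendsto_log_one_div_nhdsGT_zero.eventually_ge_atTop 1, self_mem_nhdsWithin]
    with ε hcε hL (hε : 0 < ε)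
  set L := Real.log (1 / ε)
  refine ⟨⌈b * L⌉₊, ?_, ?_⟩
  · have hhalf : (1 / 2 : ℝ) ^ ⌈b * L⌉₊ ≤ ε ^ γ * ε ^ γ := by
      calc (1 / 2 : ℝ) ^ ⌈b * L⌉₊ = (1 / 2 : ℝ) ^ (⌈b * L⌉₊ : ℝ) := (Real.rpow_natCast _ _).symm
        _ ≤ (1 / 2 : ℝ) ^ (b * L) :=
          Real.rpow_le_rpow_of_exponent_ge (by norm_num) (by norm_num) (Nat.le_ceil _)
        _ = ε ^ γ * ε ^ γ := by
          rw [Real.rpow_def_of_pos (by norm_num), Real.rpow_def_of_pos hε, ← Real.exp_add]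
          congr 1
          simp only [L, b, one_div, Real.log_inv]
          field_simp
          ring
    nlinarith [Real.rpow_nonneg hε.le γ]
  · nlinarith [Nat.ceil_lt_add_one (by positivity : 0 ≤ b * L)]

lemma entropicDim_eq_zero_of_hasGeometricPointMasses {d : ℕ} {μ : Measure (Fin d → ℝ)}
    [IsFiniteMeasure μ] (hμ : HasGeometricPointMasses μ) {γ : ℝ} (hγ : 0 < γ) :
    entropicDim μ γ = 0 := by
  obtain ⟨C, hC, hK⟩ := eventually_exists_mul_half_pow_le (Nat.cast_nonneg d) hγ
  refine Tendsto.limsup_eq (tendsto_dimRatio_of_le_pow_log d hC ?_)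
  filter_upwards [hK, Ioo_mem_nhdsGT one_pos] with ε ⟨K, hKε, hKL⟩ ⟨hε0, hε1⟩
  exact ⟨one_le_measCoverN μ ε (Real.rpow_lt_one hε0.le hε1 hγ),
    K, measCoverN_le_of_half_pow_le hμ hε0.le hKε, hKL⟩

lemma upperWDim_eq_of_entropicDim_nonpos {X : Type*} [PseudoMetricSpace X] [MeasurableSpace X]
    {μ : Measure X} {α : ℝ} (hα : 0 < α) (h : ∀ γ, 0 < γ → entropicDim μ γ ≤ 0) :
    upperWDim μ α = ((2 * α : ℝ) : EReal) := by
  refine le_antisymm (EReal.le_of_forall_lt_iff_le.1 fun s hs => sInf_le ⟨s, rfl, ?_, ?_⟩) ?_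
  · exact_mod_cast hs
  · have hs : 2 * α < s := by exact_mod_cast hs
    calc entropicDim μ (s * α / (s - 2 * α)) ≤ 0 := h _ (by apply div_pos <;> nlinarith)
      _ ≤ s := by exact_mod_cast (by linarith : (0 : ℝ) ≤ s)
  · refine le_sInf ?_
    rintro _ ⟨s, rfl, hs, -⟩
    exact_mod_cast hs.le

/-- Let `μ` be the probability measure on `ℝ^d` with
`μ({(n₁,…,n_d)}) = 2^{-(n₁+⋯+n_d)}` for positive integers `n₁, …, n_d`.  Then for every
`α > 0`, `d̄_α(μ) = 0` and `d*_α(μ) = 2α`. -/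
theorem entropicDim_and_upperWDim_of_geometric_grid
    (d : ℕ) (μ : Measure (Fin d → ℝ)) [IsProbabilityMeasure μ]
    (hμ : ∀ n : Fin d → ℕ, (∀ i, 0 < n i) →
      μ ({fun i => (n i : ℝ)} : Set (Fin d → ℝ)) = (2 : ℝ≥0∞)⁻¹ ^ (∑ i, n i))
    (α : ℝ) (hα : 0 < α) :
    entropicDim μ α = (0 : EReal) ∧ upperWDim μ α = ((2 * α : ℝ) : EReal) :=
  ⟨entropicDim_eq_zero_of_hasGeometricPointMasses hμ hα,
    upperWDim_eq_of_entropicDim_nonpos hα fun _ hγ =>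
      (entropicDim_eq_zero_of_hasGeometricPointMasses hμ hγ).le⟩
end

section
/- Let β > 0, let ν be a Borel probability measure on ℝ^ℓ, and let G, G̃: ℝ^ℓ → ℝ^d be Borel measurable maps with ∫ ‖G̃(z) − G(z)‖_∞ dν(z) < ∞. Then the β-Hölder integral probability metric between the push-forwards satisfies ‖G̃_♯ν − G_♯ν‖_{H^β(ℝ^d,ℝ,1)} ≤ ( ∫ ‖G̃(z) − G(z)‖_∞ dν(z) )^{min(β,1)}. -/
open Filter Topology MeasureTheory Set
open scoped ENNReal NNReal

open Filter Topology MeasureTheory Set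
open scoped ENNReal

/-!
If `‖f‖_{H^β} ≤ 1` then `|f| ≤ 1` and `f` is `min(β,1)`-Hölder with constant `1`: for `β < 1`
this is the Hölder seminorm term itself, and for `β ≥ 1` the sup norms of the first partials sum
to at most `1`, which bounds the operator norm of `Df` for the `ℓ∞` norm, so `f` is
`1`-Lipschitz. Transporting both integrals to `ν` gives
`|∫ f d(G̃_♯ν) - ∫ f d(G_♯ν)| ≤ ∫ ‖G̃ - G‖_∞ ^ min(β,1) dν`, and Jensen's inequality for the
concave map `t ↦ t ^ min(β,1)` finishes the proof.
-/

section MultiIndexDerivative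

variable {d : ℕ}

lemma foldr_iterate_pderiv_eq_self (s : Fin d → ℕ) (f : (Fin d → ℝ) → ℝ) {L : List (Fin d)}
    (hL : ∀ i ∈ L, s i = 0) : L.foldr (fun i g => (pderiv' i)^[s i] g) f = f := by
  induction L with
  | nil => rfl
  | cons a L ih =>
    rw [List.foldr_cons, ih fun i hi => hL i (List.mem_cons_of_mem a hi),
      hL a List.mem_cons_self, Function.iterate_zero, id_eq]

@[simp]
lemma mpderiv_zero (f : (Fin d → ℝ) → ℝ) : mpderiv 0 f = f :=
  foldr_iterate_pderiv_eq_self 0 f fun _ _ => rfl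

lemma mpderiv_single (i : Fin d) (f : (Fin d → ℝ) → ℝ) :
    mpderiv (Pi.single i 1) f = pderiv' i f := by
  obtain ⟨L₁, L₂, hL⟩ := List.append_of_mem (List.mem_finRange i)
  have hi : i ∉ L₁ ++ L₂ :=
    (List.nodup_cons.1 (List.nodup_middle.1 (hL ▸ List.nodup_finRange d))).1
  have hzero : ∀ j ∈ L₁ ++ L₂, (Pi.single i 1 : Fin d → ℕ) j = 0 := fun j hj =>
    Pi.single_eq_of_ne (by rintro rfl; exact hi hj) 1
  rw [mpderiv, hL, List.foldr_append, List.foldr_cons,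
    foldr_iterate_pderiv_eq_self _ f fun j hj => hzero j (List.mem_append_right L₁ hj),
    Pi.single_eq_same, Function.iterate_one,
    foldr_iterate_pderiv_eq_self _ _ fun j hj => hzero j (List.mem_append_left L₂ hj)]

end MultiIndexDerivative

section HolderNorm

variable {d : ℕ} {β : ℝ} {f : (Fin d → ℝ) → ℝ}

lemma iSup_nnnorm_mpderiv_le_holderNorm {s : Fin d → ℕ} (hs : ∑ i, s i ≤ ⌊β⌋₊) :
    ⨆ x, (‖mpderiv s f x‖₊ : ℝ≥0∞) ≤ holderNorm β f :=
  (ENNReal.le_tsum (⟨s, hs⟩ : {s : Fin d → ℕ // ∑ i, s i ≤ ⌊β⌋₊})).trans le_self_add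

lemma nnnorm_mpderiv_sub_div_le_holderNorm {s : Fin d → ℕ} (hs : ∑ i, s i = ⌊β⌋₊)
    {x y : Fin d → ℝ} (hxy : x ≠ y) :
    (‖mpderiv s f x - mpderiv s f y‖₊ : ℝ≥0∞) / (nndist x y : ℝ≥0∞) ^ (β - (⌊β⌋₊ : ℝ)) ≤
      holderNorm β f :=
  calc _ ≤ ⨆ (x : Fin d → ℝ) (y : Fin d → ℝ) (_ : x ≠ y),
        (‖mpderiv s f x - mpderiv s f y‖₊ : ℝ≥0∞) / (nndist x y : ℝ≥0∞) ^ (β - (⌊β⌋₊ : ℝ)) :=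
      le_iSup₂_of_le x y (le_iSup_of_le hxy le_rfl)
    _ ≤ _ := (ENNReal.le_tsum (⟨s, hs⟩ : {s : Fin d → ℕ // ∑ i, s i = ⌊β⌋₊})).trans le_add_self

lemma sum_iSup_nnnorm_pderiv_le_holderNorm (hβ : 1 ≤ β) :
    ∑ i, ⨆ x, (‖pderiv' i f x‖₊ : ℝ≥0∞) ≤ holderNorm β f := by
  classical
  let e : Fin d ↪ {s : Fin d → ℕ // ∑ j, s j ≤ ⌊β⌋₊} :=
    ⟨fun i => ⟨Pi.single i 1, by simp [Nat.one_le_floor_iff, hβ]⟩, fun i j hij => by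
      simpa [Pi.single_apply, eq_comm] using congrFun (congrArg Subtype.val hij) j⟩
  calc ∑ i, ⨆ x, (‖pderiv' i f x‖₊ : ℝ≥0∞)
      = ∑ s ∈ Finset.univ.map e, ⨆ x, (‖mpderiv s.1 f x‖₊ : ℝ≥0∞) := by
        rw [Finset.sum_map]
        exact Finset.sum_congr rfl fun i _ => by rw [← mpderiv_single]; rfl
    _ ≤ holderNorm β f := (ENNReal.sum_le_tsum _).trans le_self_add

end HolderNorm

lemma ContinuousLinearMap.opNorm_le_sum_norm_apply_single {ι 𝕜 E : Type*} [Fintype ι]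
    [DecidableEq ι] [NontriviallyNormedField 𝕜] [SeminormedAddCommGroup E] [NormedSpace 𝕜 E]
    (L : (ι → 𝕜) →L[𝕜] E) : ‖L‖ ≤ ∑ i, ‖L (Pi.single i 1)‖ := by
  refine L.opNorm_le_bound (by positivity) fun v => ?_
  have hv : L v = ∑ i, v i • L (Pi.single i 1) := by
    conv_lhs => rw [← Finset.univ_sum_single v]
    simp only [map_sum, ← map_smul, ← Pi.single_smul', smul_eq_mul, mul_one]
  calc ‖L v‖ ≤ ∑ i, ‖v i‖ * ‖L (Pi.single i 1)‖ := by
        rw [hv]; exact (norm_sum_le _ _).trans_eq (by simp only [norm_smul])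
    _ ≤ ∑ i, ‖v‖ * ‖L (Pi.single i 1)‖ := by gcongr with i; exact norm_le_pi_norm v i
    _ = _ := by rw [← Finset.mul_sum, mul_comm]

namespace HolderClass

variable {d : ℕ} {β C : ℝ} {f : (Fin d → ℝ) → ℝ}

lemma norm_le (hC : 0 ≤ C) (hf : f ∈ HolderClass d β C) (x : Fin d → ℝ) : ‖f x‖ ≤ C := by
  have h := (le_iSup _ x).trans ((iSup_nnnorm_mpderiv_le_holderNorm (f := f) (s := 0)
    (by simp)).trans hf.2)
  rw [mpderiv_zero, ← ENNReal.ofReal_coe_nnreal, coe_nnnorm] at h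
  exact (ENNReal.ofReal_le_ofReal_iff hC).1 h

lemma norm_sub_le_mul_dist_rpow_of_lt_one (hβ : β < 1) (hC : 0 ≤ C)
    (hf : f ∈ HolderClass d β C) (x y : Fin d → ℝ) : ‖f x - f y‖ ≤ C * dist x y ^ β := by
  rcases eq_or_ne x y with rfl | hxy
  · simp only [sub_self, norm_zero]; positivity
  have hfloor : ⌊β⌋₊ = 0 := Nat.floor_eq_zero.2 hβ
  have h := (nnnorm_mpderiv_sub_div_le_holderNorm (f := f) (s := 0) (by simp [hfloor]) hxy).trans
    hf.2
  have hpos : 0 < dist x y := dist_pos.2 hxy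
  rw [mpderiv_zero, hfloor, Nat.cast_zero, sub_zero, ← ENNReal.ofReal_coe_nnreal, coe_nnnorm,
    ← ENNReal.ofReal_coe_nnreal, coe_nndist, ENNReal.ofReal_rpow_of_pos hpos,
    ← ENNReal.ofReal_div_of_pos (Real.rpow_pos_of_pos hpos β),
    ENNReal.ofReal_le_ofReal_iff hC, div_le_iff₀ (Real.rpow_pos_of_pos hpos β)] at h
  exact h

lemma lipschitzWith (hβ : 1 ≤ β) (hC : 0 ≤ C) (hf : f ∈ HolderClass d β C) :
    LipschitzWith C.toNNReal f := by
  classical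
  have hdiff : Differentiable ℝ f :=
    hf.1.differentiable (by exact_mod_cast (Nat.floor_pos.2 hβ).ne')
  refine lipschitzWith_of_nnnorm_fderiv_le hdiff fun z => ?_
  have hsum : ∑ i, ‖pderiv' i f z‖ ≤ C := by
    have h := (Finset.sum_le_sum fun i _ => le_iSup (fun x => (‖pderiv' i f x‖₊ : ℝ≥0∞)) z).trans
      ((sum_iSup_nnnorm_pderiv_le_holderNorm hβ).trans hf.2)
    rw [← ENNReal.ofNNReal_finsetSum, ← ENNReal.ofReal_coe_nnreal, NNReal.coe_sum] at h
    simpa only [coe_nnnorm, ENNReal.ofReal_le_ofReal_iff hC] using h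
  rw [← NNReal.coe_le_coe, coe_nnnorm, Real.coe_toNNReal C hC]
  exact ((fderiv ℝ f z).opNorm_le_sum_norm_apply_single).trans hsum

lemma norm_sub_le_mul_dist_rpow (hC : 0 ≤ C) (hf : f ∈ HolderClass d β C) (x y : Fin d → ℝ) :
    ‖f x - f y‖ ≤ C * dist x y ^ min β 1 := by
  rcases lt_or_ge β 1 with hβ | hβ
  · rw [min_eq_left hβ.le]
    exact norm_sub_le_mul_dist_rpow_of_lt_one hβ hC hf x y
  · rw [min_eq_right hβ, Real.rpow_one, ← dist_eq_norm]
    simpa [Real.coe_toNNReal C hC] using (lipschitzWith hβ hC hf).dist_le_mul x y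

end HolderClass

lemma Real.rpow_le_one_add {x p : ℝ} (hx : 0 ≤ x) (hp₀ : 0 ≤ p) (hp₁ : p ≤ 1) :
    x ^ p ≤ 1 + x := by
  rcases le_total x 1 with h | h
  · linarith [Real.rpow_le_one hx h hp₀]
  · have := Real.rpow_le_rpow_of_exponent_le h hp₁
    rw [Real.rpow_one] at this
    linarith

section Integral

variable {Ω : Type*} [MeasurableSpace Ω] {μ : Measure Ω} {g : Ω → ℝ} {p : ℝ}

lemma MeasureTheory.Integrable.rpow_of_le_one [IsFiniteMeasure μ] (hg : Integrable g μ)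
    (hg₀ : ∀ z, 0 ≤ g z) (hp₀ : 0 ≤ p) (hp₁ : p ≤ 1) : Integrable (fun z => g z ^ p) μ :=
  ((integrable_const 1).add hg).mono'
    (hg.aemeasurable.pow_const p).aestronglyMeasurable
    (ae_of_all _ fun z => by
      rw [Real.norm_of_nonneg (Real.rpow_nonneg (hg₀ z) p)]
      exact Real.rpow_le_one_add (hg₀ z) hp₀ hp₁)

lemma integral_rpow_le_rpow_integral [IsProbabilityMeasure μ] (hg : Integrable g μ)
    (hg₀ : ∀ z, 0 ≤ g z) (hp₀ : 0 ≤ p) (hp₁ : p ≤ 1) :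
    ∫ z, g z ^ p ∂μ ≤ (∫ z, g z ∂μ) ^ p :=
  (Real.concaveOn_rpow hp₀ hp₁).le_map_integral
    (Real.continuous_rpow_const hp₀).continuousOn isClosed_Ici (ae_of_all _ hg₀) hg
    (hg.rpow_of_le_one hg₀ hp₀ hp₁)

lemma abs_integral_map_sub_integral_map_le {X : Type*} [MeasurableSpace X] [IsFiniteMeasure μ]
    {G G' : Ω → X} (hG : Measurable G) (hG' : Measurable G') {f : X → ℝ} (hf : Measurable f)
    {C : ℝ} (hfC : ∀ x, ‖f x‖ ≤ C) :
    |∫ x, f x ∂μ.map G' - ∫ x, f x ∂μ.map G| ≤ ∫ z, |f (G' z) - f (G z)| ∂μ := by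
  have hint : ∀ {H : Ω → X}, Measurable H → Integrable (fun z => f (H z)) μ := fun hH =>
    (integrable_const C).mono' (hf.comp hH).aestronglyMeasurable (ae_of_all _ fun z => hfC _)
  rw [integral_map hG'.aemeasurable hf.aestronglyMeasurable,
    integral_map hG.aemeasurable hf.aestronglyMeasurable, ← integral_sub (hint hG') (hint hG)]
  exact abs_integral_le_integral_abs

end Integral

/-- For Borel maps `G, G̃ : ℝ^l → ℝ^d` with `∫ ‖G̃ − G‖_∞ dν < ∞` and a
Borel probability measure `ν` on `ℝ^l`,
`‖G̃_♯ν − G_♯ν‖_{H^β(ℝ^d,ℝ,1)} ≤ (∫ ‖G̃(z) − G(z)‖_∞ dν(z))^{min(β,1)}`. -/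
theorem holder_ipm_pushforward_le
    (d l : ℕ) (β : ℝ) (hβ : 0 < β)
    (ν : Measure (Fin l → ℝ)) [IsProbabilityMeasure ν]
    (G Gt : (Fin l → ℝ) → (Fin d → ℝ)) (hG : Measurable G) (hGt : Measurable Gt)
    (hint : Integrable (fun z => dist (Gt z) (G z)) ν) :
    ipm (HolderClass d β 1) (ν.map Gt) (ν.map G) ≤
      (∫ z, dist (Gt z) (G z) ∂ν) ^ (min β 1) := by
  have hp₀ : 0 ≤ min β 1 := le_min hβ.le zero_le_one
  have hp₁ : min β 1 ≤ 1 := min_le_right β 1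
  refine Real.iSup_le (fun ⟨f, hf⟩ => ?_) (by positivity)
  calc |∫ x, f x ∂ν.map Gt - ∫ x, f x ∂ν.map G|
      ≤ ∫ z, |f (Gt z) - f (G z)| ∂ν :=
        abs_integral_map_sub_integral_map_le hG hGt hf.1.continuous.measurable
          (HolderClass.norm_le zero_le_one hf)
    _ ≤ ∫ z, dist (Gt z) (G z) ^ min β 1 ∂ν :=
        integral_mono_of_nonneg (ae_of_all _ fun z => abs_nonneg _)
          (hint.rpow_of_le_one (fun z => dist_nonneg) hp₀ hp₁)
          (ae_of_all _ fun z => by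
            simpa using HolderClass.norm_sub_le_mul_dist_rpow zero_le_one hf (Gt z) (G z))
    _ ≤ (∫ z, dist (Gt z) (G z) ∂ν) ^ min β 1 :=
        integral_rpow_le_rpow_integral hint (fun z => dist_nonneg) hp₀ hp₁
end
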